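/- Let ζ ∈ (-1, 0) and let 0 < ξ < 1 be small enough that 1 + (4/(ζ²-1))·(ξ/(1-ξ)) > 0. Then 1 - ζ - 2α₀ > 0, where α₀ = (1/2)(1 - ξ(1 + 2/|1-ζ| - 2/|1+ζ|))/(1 - ξ). That is, for inner pushers the coefficient A = (f_p L/(32πμ))(1 - ζ - 2α₀) is positive whenever f_p, L, μ > 0. -/

import Mathlib

open Real

/-- The leading-order force splitting parameter `α₀` of the dumbbell swimmer. -/
noncomputable def forceSplitting (ζ ξ : ℝ) : ℝ :=
  (1 / 2) * (1 - ξ * (1 + 2 / |1 - ζ| - 2 / |1 + ζ|)) / (1 - ξ)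

/-- For `|ζ| < 1` the terms `2 / |1 - ζ| - 2 / |1 + ζ|` combine into `4ζ / (1 - ζ²)`. -/
theorem one_sub_sub_two_mul_forceSplitting {ζ ξ : ℝ} (hζ0 : -1 < ζ) (hζ1 : ζ < 1)
    (hξ : ξ ≠ 1) :
    1 - ζ - 2 * forceSplitting ζ ξ = -ζ * (1 + (4 / (ζ ^ 2 - 1)) * (ξ / (1 - ξ))) := by
  have h1 : 1 - ζ ≠ 0 := by linarith
  have h2 : 1 + ζ ≠ 0 := by linarith
  have h3 : 1 - ξ ≠ 0 := sub_ne_zero.2 hξ.symm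
  have h4 : ζ ^ 2 - 1 ≠ 0 := by nlinarith
  rw [forceSplitting, abs_of_pos (by linarith : 0 < 1 - ζ), abs_of_pos (by linarith : 0 < 1 + ζ)]
  field_simp
  ring

theorem inner_pusher_positive_general (ζ ξ : ℝ) (hζ0 : -1 < ζ) (hζ1 : ζ < 0)
    (hξ1 : ξ < 1)
    (hsmall : 1 + (4 / (ζ ^ 2 - 1)) * (ξ / (1 - ξ)) > 0) :
    1 - ζ - 2 * ((1 / 2) * (1 - ξ * (1 + 2 / |1 - ζ| - 2 / |1 + ζ|)) / (1 - ξ)) > 0 ∧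
    ∀ fp L μ : ℝ, 0 < fp → 0 < L → 0 < μ →
      (fp * L / (32 * Real.pi * μ)) *
        (1 - ζ - 2 * ((1 / 2) * (1 - ξ * (1 + 2 / |1 - ζ| - 2 / |1 + ζ|)) / (1 - ξ))) > 0 := by
  have hA : 0 < 1 - ζ - 2 * forceSplitting ζ ξ := by
    rw [one_sub_sub_two_mul_forceSplitting hζ0 (by linarith) hξ1.ne]
    exact mul_pos (neg_pos.2 hζ1) hsmall
  refine ⟨hA, fun fp L μ hfp hL hμ => mul_pos (by positivity) hA⟩

theorem inner_pusher_positive (ζ ξ : ℝ) (hζ0 : -1 < ζ) (hζ1 : ζ < 0)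
    (hξ0 : 0 < ξ) (hξ1 : ξ < 1)
    (hsmall : 1 + (4 / (ζ ^ 2 - 1)) * (ξ / (1 - ξ)) > 0) :
    1 - ζ - 2 * ((1 / 2) * (1 - ξ * (1 + 2 / |1 - ζ| - 2 / |1 + ζ|)) / (1 - ξ)) > 0 ∧
    ∀ fp L μ : ℝ, 0 < fp → 0 < L → 0 < μ →
      (fp * L / (32 * Real.pi * μ)) *
        (1 - ζ - 2 * ((1 / 2) * (1 - ξ * (1 + 2 / |1 - ζ| - 2 / |1 + ζ|)) / (1 - ξ))) > 0 :=
  inner_pusher_positive_general ζ ξ hζ0 hζ1 hξ1 hsmall
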